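/- Let Φ = {3^{-4}x, 3^{-4}x + d_2, 3^{-4}x + d_3, 3^{-4}x + d_4}, where d_2 = 2·3^{-3}, d_3 = 2·3^{-2} + 2·3^{-3} − 2·3^{-5}, d_4 = 2·3^{-2} − 2·3^{-5}. Let a = Σ_{t=0}^∞ (2·3^{-(4t+1)} + 2·3^{-(4t+4)}) (i.e. a has ternary digits (2,0,0,2) repeating). Then a + F_Φ ⊆ C, where F_Φ is the attractor of Φ and C the middle-third Cantor set. -/

import Mathlib

/-- The middle-third Cantor set. -/
def cantorC : Set ℝ :=
  {x | ∃ ε : ℕ → ℝ, (∀ n, ε n = 0 ∨ ε n = 2) ∧ x = ∑' n : ℕ, ε n / 3 ^ (n + 1)}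

lemma summable_geom23 : Summable (fun n : ℕ => (2:ℝ) / 3 ^ (n+1)) := by
  have h : (fun n : ℕ => (2:ℝ) / 3 ^ (n+1)) = fun n => (2/3) * (1/3:ℝ)^n := by
    funext n; rw [pow_succ, one_div_pow]; ring
  rw [h]
  exact (summable_geometric_of_lt_one (by norm_num) (by norm_num)).mul_left _

lemma summable_digits {ε : ℕ → ℝ} (hε : ∀ n, ε n = 0 ∨ ε n = 2) :
    Summable (fun n => ε n / 3 ^ (n+1)) := by
  refine Summable.of_nonneg_of_le (fun n => ?_) (fun n => ?_) summable_geom23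
  · rcases hε n with h|h <;> rw [h] <;> positivity
  · rcases hε n with h|h <;> rw [h]
    rw [zero_div]; positivity

lemma tsum_geom23 : ∑' n : ℕ, (2:ℝ) / 3 ^ (n+1) = 1 := by
  have h : (fun n : ℕ => (2:ℝ) / 3 ^ (n+1)) = fun n => (2/3) * (1/3:ℝ)^n := by
    funext n; rw [pow_succ, one_div_pow]; ring
  rw [h, tsum_mul_left, tsum_geometric_of_lt_one (by norm_num) (by norm_num)]
  norm_num

lemma cantor_isCompact : IsCompact cantorC := by
  have himg : cantorC =
      (fun ε : ℕ → ℝ => ∑' n : ℕ, max 0 (min (ε n) 2) / 3 ^ (n+1)) ''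
        (Set.univ.pi fun _ : ℕ => ({0, 2} : Set ℝ)) := by
    ext x
    constructor
    · rintro ⟨ε, hε, rfl⟩
      refine ⟨ε, fun n _ => ?_, ?_⟩
      · rcases hε n with h|h <;> simp [h]
      · simp only []; exact tsum_congr fun n => by rcases hε n with h|h <;> rw [h] <;> norm_num [max_def, min_def]
    · rintro ⟨ε, hε, rfl⟩
      refine ⟨ε, fun n => ?_, ?_⟩
      · have := hε n (Set.mem_univ n); simpa using this
      · simp only []; exact tsum_congr fun n => by
          have h2 : ε n = 0 ∨ ε n = 2 := by simpa using hε n (Set.mem_univ n)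
          rcases h2 with h|h <;> rw [h] <;> norm_num [max_def, min_def]
  rw [himg]
  refine IsCompact.image ?_ ?_
  · exact isCompact_univ_pi fun n => (Set.toFinite ({0,2} : Set ℝ)).isCompact
  · refine continuous_tsum (fun n => ?_) summable_geom23 (fun n x => ?_)
    · exact (continuous_const.max ((continuous_apply n).min continuous_const)).div_const _
    · rw [Real.norm_eq_abs, abs_div, abs_of_nonneg (by positivity : (0:ℝ) ≤ 3^(n+1))]
      apply div_le_div_of_nonneg_right ?_ (by positivity)
      rw [abs_of_nonneg (le_max_left 0 _)]
      exact max_le (by norm_num) (min_le_right _ _)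

lemma cantor_isClosed : IsClosed cantorC := cantor_isCompact.isClosed

lemma tail_le {ε : ℕ → ℝ} (hε : ∀ n, ε n = 0 ∨ ε n = 2) :
    ∑' n : ℕ, ε (n+1) / 3 ^ (n+2) ≤ 1/3 := by
  have hs2 : Summable (fun n : ℕ => (2:ℝ) / 3 ^ (n+2)) := by
    have h := (summable_nat_add_iff (f := fun n : ℕ => (2:ℝ)/3^(n+1)) 1).2 summable_geom23
    simpa using h
  have h2 : ∑' n : ℕ, (2:ℝ) / 3 ^ (n+2) = 1/3 := by
    have := Summable.sum_add_tsum_nat_add 1 summable_geom23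
    rw [tsum_geom23] at this
    simp [Finset.sum_range_succ] at this
    linarith
  rw [← h2]
  have hs1 : Summable (fun n : ℕ => ε (n+1) / 3 ^ (n+2)) := by
    have h := (summable_nat_add_iff (f := fun n : ℕ => ε n/3^(n+1)) 1).2 (summable_digits hε)
    simpa using h
  refine Summable.tsum_le_tsum (fun n => ?_) hs1 hs2
  rcases hε (n+1) with h|h <;> rw [h]
  rw [zero_div]; positivity

lemma digit0 {ε : ℕ → ℝ} (hε : ∀ n, ε n = 0 ∨ ε n = 2)
    (h : 2/3 ≤ ∑' n : ℕ, ε n / 3 ^ (n+1)) : ε 0 = 2 := by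
  rcases hε 0 with h0|h0
  · exfalso
    have hsplit := Summable.sum_add_tsum_nat_add 1 (summable_digits hε)
    rw [Finset.sum_range_one, h0, zero_div, zero_add] at hsplit
    have := tail_le hε
    rw [← hsplit] at h
    linarith
  · exact h0

lemma tsum_digits_nonneg {ε : ℕ → ℝ} (hε : ∀ n, ε n = 0 ∨ ε n = 2) :
    0 ≤ ∑' n : ℕ, ε n / 3 ^ (n+1) := by
  refine tsum_nonneg fun n => ?_
  rcases hε n with h|h <;> rw [h] <;> positivity

lemma stepA {c b1 b2 : ℝ} (hc : c ∈ cantorC) (hb1 : b1 = 0 ∨ b1 = 2) (hb2 : b2 = 0 ∨ b2 = 2) :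
    2/3 + b1/9 + b2/27 + 2/81 + c/81 ∈ cantorC := by
  obtain ⟨ε, hε, rfl⟩ := hc
  set ε' : ℕ → ℝ := fun n => if n = 0 then 2 else if n = 1 then b1 else
    if n = 2 then b2 else if n = 3 then 2 else ε (n-4) with hε'def
  have hε' : ∀ n, ε' n = 0 ∨ ε' n = 2 := by
    intro n
    simp only [hε'def]
    split_ifs
    · norm_num
    · exact hb1
    · exact hb2
    · norm_num
    · exact hε _
  have hshift : ∀ n : ℕ, ε' (n+4) = ε n := by
    intro n; simp only [hε'def]
    rw [if_neg (by omega), if_neg (by omega), if_neg (by omega), if_neg (by omega)]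
    simp
  refine ⟨ε', hε', ?_⟩
  rw [← Summable.sum_add_tsum_nat_add 4 (summable_digits hε')]
  have hpre : ∑ i ∈ Finset.range 4, ε' i / 3 ^ (i+1) = 2/3 + b1/9 + b2/27 + 2/81 := by
    simp [Finset.sum_range_succ, hε'def]; ring
  have htail : ∑' n : ℕ, ε' (n+4) / 3 ^ (n+4+1) = (∑' n : ℕ, ε n / 3 ^ (n+1)) / 81 := by
    rw [← tsum_div_const]
    refine tsum_congr fun n => ?_
    rw [hshift n, show n+4+1 = (n+1)+4 from by omega, pow_add, div_div]
    norm_num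
  rw [hpre, htail]

lemma stepB {c b : ℝ} (hc : c ∈ cantorC) (h23 : 2/3 ≤ c) (hb : b = 0 ∨ b = 2) :
    2/3 + 2/9 + b/27 + 2/81 + (c - 2/3)/81 ∈ cantorC := by
  obtain ⟨ε, hε, rfl⟩ := hc
  have h0 : ε 0 = 2 := digit0 hε h23
  set ε' : ℕ → ℝ := fun n => if n = 0 then 2 else if n = 1 then 2 else
    if n = 2 then b else if n = 3 then 2 else if n = 4 then 0 else ε (n-4) with hε'def
  have hε' : ∀ n, ε' n = 0 ∨ ε' n = 2 := by
    intro n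
    simp only [hε'def]
    split_ifs
    · norm_num
    · norm_num
    · exact hb
    · norm_num
    · norm_num
    · exact hε _
  have hshift : ∀ n : ℕ, ε' (n+5) = ε (n+1) := by
    intro n; simp only [hε'def]
    rw [if_neg (by omega), if_neg (by omega), if_neg (by omega), if_neg (by omega),
      if_neg (by omega)]
    congr 1
  refine ⟨ε', hε', ?_⟩
  rw [← Summable.sum_add_tsum_nat_add 5 (summable_digits hε')]
  have hpre : ∑ i ∈ Finset.range 5, ε' i / 3 ^ (i+1) = 2/3 + 2/9 + b/27 + 2/81 := by
    simp [Finset.sum_range_succ, hε'def]; ring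
  have hc2 : ∑' n : ℕ, ε n / 3 ^ (n+1) - 2/3 = ∑' n : ℕ, ε (n+1) / 3 ^ (n+2) := by
    have hsplit := Summable.sum_add_tsum_nat_add 1 (summable_digits hε)
    rw [Finset.sum_range_one, h0] at hsplit
    have : ∀ n : ℕ, ε (n+1) / 3 ^ (n+1+1) = ε (n+1) / 3 ^ (n+2) := fun n => rfl
    rw [← hsplit]
    norm_num
  have htail : ∑' n : ℕ, ε' (n+5) / 3 ^ (n+5+1) =
      (∑' n : ℕ, ε (n+1) / 3 ^ (n+2)) / 81 := by
    rw [← tsum_div_const]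
    refine tsum_congr fun n => ?_
    rw [hshift n, show n+5+1 = (n+2)+4 from by omega, pow_add, div_div]
    norm_num
  rw [hpre, htail, ← hc2]

lemma tsum_a : ∑' t : ℕ, (2 / 3 ^ (4*t+1) + 2 / 3 ^ (4*t+4) : ℝ) = 7/10 := by
  have h : ∀ t : ℕ, (2 / 3 ^ (4*t+1) + 2 / 3 ^ (4*t+4) : ℝ) = (56/81) * (1/81:ℝ)^t := by
    intro t
    have h1 : (3:ℝ)^(4*t+1) = 3 * 81^t := by
      rw [pow_add, pow_mul]; norm_num [mul_comm]
    have h2 : (3:ℝ)^(4*t+4) = 81 * 81^t := by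
      rw [pow_add, pow_mul]; norm_num [mul_comm]
    have hp : (0:ℝ) < (81:ℝ)^t := by positivity
    rw [h1, h2, div_pow]
    field_simp
    ring
  rw [tsum_congr h, tsum_mul_left, tsum_geometric_of_lt_one (by norm_num) (by norm_num)]
  norm_num

lemma two_thirds_mem : (2/3 : ℝ) ∈ cantorC := by
  have hd : ∀ n : ℕ, (if n = 0 then (2:ℝ) else 0) = 0 ∨ (if n = 0 then (2:ℝ) else 0) = 2 := by
    intro n; split_ifs <;> norm_num
  refine ⟨fun n => if n = 0 then 2 else 0, hd, ?_⟩
  rw [← Summable.sum_add_tsum_nat_add 1 (summable_digits hd), Finset.sum_range_one]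
  have h0 : ∀ n : ℕ, (if n + 1 = 0 then (2:ℝ) else 0) / 3 ^ (n+1+1) = 0 := by
    intro n; norm_num
  rw [tsum_congr h0, tsum_zero]
  norm_num

def KS : Set ℝ := {y : ℝ | 7/10 + y ∈ cantorC ∧ 2/3 ≤ 7/10 + y}

lemma KS_closed : IsClosed KS := by
  have : KS = (fun y : ℝ => 7/10 + y) ⁻¹' (cantorC ∩ Set.Ici (2/3)) := rfl
  rw [this]
  exact (cantor_isClosed.inter isClosed_Ici).preimage (continuous_const.add continuous_id)

lemma KS_mem : (2/3 - 7/10 : ℝ) ∈ KS := by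
  constructor
  · have : (7/10 : ℝ) + (2/3 - 7/10) = 2/3 := by ring
    rw [this]; exact two_thirds_mem
  · norm_num

lemma KS_inv1 {y : ℝ} (hy : y ∈ KS) : y / 3^4 ∈ KS := by
  obtain ⟨hc, h23⟩ := hy
  constructor
  · have h := stepA hc (Or.inl rfl) (Or.inl rfl)
    have e : (7/10 : ℝ) + y/3^4 = 2/3 + 0/9 + 0/27 + 2/81 + (7/10+y)/81 := by ring
    rw [e]; exact h
  · show (2/3 : ℝ) ≤ 7/10 + y/3^4
    have : (3:ℝ)^4 = 81 := by norm_num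
    rw [this]; linarith

lemma KS_inv2 {y : ℝ} (hy : y ∈ KS) : y / 3^4 + 2/3^3 ∈ KS := by
  obtain ⟨hc, h23⟩ := hy
  constructor
  · have h := stepA hc (Or.inl rfl) (Or.inr rfl)
    have e : (7/10 : ℝ) + (y/3^4 + 2/3^3) = 2/3 + 0/9 + 2/27 + 2/81 + (7/10+y)/81 := by ring
    rw [e]; exact h
  · show (2/3 : ℝ) ≤ 7/10 + (y/3^4 + 2/3^3)
    have : (3:ℝ)^4 = 81 := by norm_num
    rw [this]; norm_num; linarith

lemma KS_inv3 {y : ℝ} (hy : y ∈ KS) : y / 3^4 + (2/3^2 + 2/3^3 - 2/3^5) ∈ KS := by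
  obtain ⟨hc, h23⟩ := hy
  constructor
  · have h := stepB hc h23 (Or.inr rfl)
    have e : (7/10 : ℝ) + (y/3^4 + (2/3^2 + 2/3^3 - 2/3^5)) =
        2/3 + 2/9 + 2/27 + 2/81 + ((7/10+y) - 2/3)/81 := by ring
    rw [e]; exact h
  · show (2/3 : ℝ) ≤ 7/10 + (y/3^4 + (2/3^2 + 2/3^3 - 2/3^5))
    have : (3:ℝ)^4 = 81 := by norm_num
    rw [this]; norm_num; linarith

lemma KS_inv4 {y : ℝ} (hy : y ∈ KS) : y / 3^4 + (2/3^2 - 2/3^5) ∈ KS := by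
  obtain ⟨hc, h23⟩ := hy
  constructor
  · have h := stepB hc h23 (Or.inl rfl)
    have e : (7/10 : ℝ) + (y/3^4 + (2/3^2 - 2/3^5)) =
        2/3 + 2/9 + 0/27 + 2/81 + ((7/10+y) - 2/3)/81 := by ring
    rw [e]; exact h
  · show (2/3 : ℝ) ≤ 7/10 + (y/3^4 + (2/3^2 - 2/3^5))
    have : (3:ℝ)^4 = 81 := by norm_num
    rw [this]; norm_num; linarith

theorem stmt_14 (F : Set ℝ) (hFne : F.Nonempty) (hFc : IsCompact F)
    (hattr : F =
      (fun x => x / 3 ^ 4) '' F ∪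
      (fun x => x / 3 ^ 4 + 2 / 3 ^ 3) '' F ∪
      (fun x => x / 3 ^ 4 + (2 / 3 ^ 2 + 2 / 3 ^ 3 - 2 / 3 ^ 5)) '' F ∪
      (fun x => x / 3 ^ 4 + (2 / 3 ^ 2 - 2 / 3 ^ 5)) '' F)
    (a : ℝ) (ha : a = ∑' t : ℕ, (2 / 3 ^ (4 * t + 1) + 2 / 3 ^ (4 * t + 4) : ℝ)) :
    ∀ x ∈ F, a + x ∈ cantorC := by
  intro x hx
  rw [ha, tsum_a]
  obtain ⟨R, hR⟩ := hFc.isBounded.exists_norm_le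
  set M := R + 1 with hM
  have key : ∀ n : ℕ, ∀ z ∈ F, ∃ y ∈ KS, |z - y| ≤ M / 81^n := by
    intro n
    induction n with
    | zero =>
      intro z hz
      refine ⟨2/3 - 7/10, KS_mem, ?_⟩
      have h1 : |z| ≤ R := hR z hz
      have h2 : |z - (2/3 - 7/10)| ≤ |z| + |(2/3 - 7/10 : ℝ)| := by
        rw [sub_eq_add_neg]
        exact (abs_add_le _ _).trans (by rw [abs_neg])
      have h3 : |(2/3 - 7/10 : ℝ)| ≤ 1 := by rw [abs_le]; constructor <;> norm_num
      rw [pow_zero, div_one]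
      linarith
    | succ n ih =>
      intro z hz
      rw [hattr] at hz
      have hstep : M / 81^(n+1) = (M/81^n)/81 := by rw [pow_succ, div_div]
      rcases hz with ((⟨w,hw,rfl⟩|⟨w,hw,rfl⟩)|⟨w,hw,rfl⟩)|⟨w,hw,rfl⟩ <;>
        obtain ⟨y, hy, hd⟩ := ih w hw
      · refine ⟨y/3^4, KS_inv1 hy, ?_⟩
        show |w/3^4 - y/3^4| ≤ M/81^(n+1)
        have e : w/3^4 - y/3^4 = (w-y)/81 := by ring
        rw [e, hstep, abs_div, abs_of_nonneg (by norm_num : (0:ℝ) ≤ 81)]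
        gcongr
      · refine ⟨y/3^4 + 2/3^3, KS_inv2 hy, ?_⟩
        show |(w/3^4 + 2/3^3) - (y/3^4 + 2/3^3)| ≤ M/81^(n+1)
        have e : (w/3^4 + 2/3^3) - (y/3^4 + 2/3^3) = (w-y)/81 := by ring
        rw [e, hstep, abs_div, abs_of_nonneg (by norm_num : (0:ℝ) ≤ 81)]
        gcongr
      · refine ⟨y/3^4 + (2/3^2 + 2/3^3 - 2/3^5), KS_inv3 hy, ?_⟩
        show |(w/3^4 + (2/3^2 + 2/3^3 - 2/3^5)) - (y/3^4 + (2/3^2 + 2/3^3 - 2/3^5))| ≤ M/81^(n+1)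
        have e : (w/3^4 + (2/3^2 + 2/3^3 - 2/3^5)) - (y/3^4 + (2/3^2 + 2/3^3 - 2/3^5))
            = (w-y)/81 := by ring
        rw [e, hstep, abs_div, abs_of_nonneg (by norm_num : (0:ℝ) ≤ 81)]
        gcongr
      · refine ⟨y/3^4 + (2/3^2 - 2/3^5), KS_inv4 hy, ?_⟩
        show |(w/3^4 + (2/3^2 - 2/3^5)) - (y/3^4 + (2/3^2 - 2/3^5))| ≤ M/81^(n+1)
        have e : (w/3^4 + (2/3^2 - 2/3^5)) - (y/3^4 + (2/3^2 - 2/3^5)) = (w-y)/81 := by ring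
        rw [e, hstep, abs_div, abs_of_nonneg (by norm_num : (0:ℝ) ≤ 81)]
        gcongr
  have hx' : x ∈ KS := by
    rw [← KS_closed.closure_eq, Metric.mem_closure_iff]
    intro δ hδ
    obtain ⟨n, hn⟩ := pow_unbounded_of_one_lt (M/δ) (by norm_num : (1:ℝ) < 81)
    obtain ⟨y, hy, hb⟩ := key n x hx
    refine ⟨y, hy, ?_⟩
    rw [Real.dist_eq]
    have h81 : (0:ℝ) < 81^n := by positivity
    have hlt : M/81^n < δ := by
      rw [div_lt_iff₀ h81]
      have := (div_lt_iff₀ hδ).mp hn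
      nlinarith
    linarith
  exact hx'.1
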